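/- Let ⊗ be a continuous t-norm with residuum ⇒, and consider fuzzy ALC semantics as above extended with a binary concept constructor min(C, D) interpreted pointwise by the minimum: (min(C,D))^I(x) = min(C^I(x), D^I(x)). Let K be a fuzzy knowledge base, C and D concepts, and A an atomic concept occurring neither in K nor in C nor in D. Then K ∪ {⟨C ⊑ D ≥ 1⟩} is satisfiable iff K ∪ {⟨C ⊑ min(A, D) ≥ 1⟩, ⟨min(A, D) ⊑ C ≥ 1⟩} is satisfiable; moreover the same equivalence holds for satisfiability in interpretations with finite domain, and for satisfiability in witnessed interpretations. -/

import Mathlib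

/-!
The backward direction holds in every interpretation: `C ⊑ min(A, D) ⊑ D`, because the residuum
is monotone in its second argument. For the forward direction, reinterpret `A` as `C^I`, keeping
domain, roles and individuals. As `A` is fresh, this changes no value of `K`, `C` or `D`; and
every value in the new interpretation is a value in the old one of the concept obtained by
substituting `C` for `A`, so attained infima and suprema stay attained. For a continuous t-norm,
`⟨C ⊑ D ≥ 1⟩` holds iff `C^I ≤ D^I` pointwise (the set defining the residuum is closed), so
`min(A, D)` and `C` now coincide.
-/


/-- ALC concepts over countably many atomic concepts and role names. -/
inductive GConcept : Type where
  | atom : ℕ → GConcept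
  | top  : GConcept
  | bot  : GConcept
  | conj : GConcept → GConcept → GConcept
  | disj : GConcept → GConcept → GConcept
  | neg  : GConcept → GConcept
  | minc : GConcept → GConcept → GConcept
  | all  : ℕ → GConcept → GConcept
  | ex   : ℕ → GConcept → GConcept
deriving DecidableEq

/-- `f` is a continuous t-norm (on `[0,1]`, coded as a function on `ℝ`). -/
def IsContinuousTnorm (f : ℝ → ℝ → ℝ) : Prop :=
  (∀ x ∈ Set.Icc (0:ℝ) 1, ∀ y ∈ Set.Icc (0:ℝ) 1, f x y ∈ Set.Icc (0:ℝ) 1) ∧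
  (∀ x ∈ Set.Icc (0:ℝ) 1, ∀ y ∈ Set.Icc (0:ℝ) 1, f x y = f y x) ∧
  (∀ x ∈ Set.Icc (0:ℝ) 1, ∀ y ∈ Set.Icc (0:ℝ) 1, ∀ z ∈ Set.Icc (0:ℝ) 1,
    f (f x y) z = f x (f y z)) ∧
  (∀ x ∈ Set.Icc (0:ℝ) 1, ∀ x' ∈ Set.Icc (0:ℝ) 1, ∀ y ∈ Set.Icc (0:ℝ) 1,
    ∀ y' ∈ Set.Icc (0:ℝ) 1, x ≤ x' → y ≤ y' → f x y ≤ f x' y') ∧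
  (∀ x ∈ Set.Icc (0:ℝ) 1, f x 1 = x) ∧
  ContinuousOn (fun p : ℝ × ℝ => f p.1 p.2) (Set.Icc (0:ℝ) 1 ×ˢ Set.Icc (0:ℝ) 1)

/-- The residuum `x ⇒ y = sup {z ∈ [0,1] : f x z ≤ y}` of `f`. -/
noncomputable def res (f : ℝ → ℝ → ℝ) (x y : ℝ) : ℝ :=
  sSup {z ∈ Set.Icc (0:ℝ) 1 | f x z ≤ y}

/-- A fuzzy interpretation. -/
structure Interp : Type 1 where
  Δ : Type
  nonempty : Nonempty Δ
  atom : ℕ → Δ → ℝ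
  role : ℕ → Δ → Δ → ℝ
  ind : ℕ → Δ
  atom_mem : ∀ i x, atom i x ∈ Set.Icc (0:ℝ) 1
  role_mem : ∀ j x y, role j x y ∈ Set.Icc (0:ℝ) 1

/-- Value of a concept at a point, where `⊓`/`∃` are interpreted via the t-norm `f`,
`∀` via the residuum of `f`, `⊔` via `e` and `¬` via `n`. -/
noncomputable def gval (f e : ℝ → ℝ → ℝ) (n : ℝ → ℝ) (I : Interp) :
    GConcept → I.Δ → ℝ
  | GConcept.atom i, x => I.atom i x
  | GConcept.top, _ => 1
  | GConcept.bot, _ => 0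
  | GConcept.conj C D, x => f (gval f e n I C x) (gval f e n I D x)
  | GConcept.disj C D, x => e (gval f e n I C x) (gval f e n I D x)
  | GConcept.neg C, x => n (gval f e n I C x)
  | GConcept.minc C D, x => min (gval f e n I C x) (gval f e n I D x)
  | GConcept.all j C, x => ⨅ y, res f (I.role j x y) (gval f e n I C y)
  | GConcept.ex j C, x => ⨆ y, f (I.role j x y) (gval f e n I C y)

/-- Degree of subsumption `(C ⊑ D)^I`. -/
noncomputable def gsub (f e : ℝ → ℝ → ℝ) (n : ℝ → ℝ) (I : Interp) (C D : GConcept) : ℝ :=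
  ⨅ x, res f (gval f e n I C x) (gval f e n I D x)

/-- Axioms of fuzzy knowledge bases. -/
inductive KAxiom : Type where
  | assertGE : ℕ → GConcept → ℚ → KAxiom
  | assertLE : ℕ → GConcept → ℚ → KAxiom
  | roleGE : ℕ → ℕ → ℕ → ℚ → KAxiom
  | gci : GConcept → GConcept → ℚ → KAxiom
deriving DecidableEq

/-- The rational constant of an axiom lies in `[0,1]`. -/
def axBounded : KAxiom → Prop
  | KAxiom.assertGE _ _ q => 0 ≤ q ∧ q ≤ 1
  | KAxiom.assertLE _ _ q => 0 ≤ q ∧ q ≤ 1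
  | KAxiom.roleGE _ _ _ q => 0 ≤ q ∧ q ≤ 1
  | KAxiom.gci _ _ q => 0 ≤ q ∧ q ≤ 1

/-- Satisfaction of an axiom in an interpretation. -/
def gsat (f e : ℝ → ℝ → ℝ) (n : ℝ → ℝ) (I : Interp) : KAxiom → Prop
  | KAxiom.assertGE a C q => (q : ℝ) ≤ gval f e n I C (I.ind a)
  | KAxiom.assertLE a C q => gval f e n I C (I.ind a) ≤ (q : ℝ)
  | KAxiom.roleGE a b j q => (q : ℝ) ≤ I.role j (I.ind a) (I.ind b)
  | KAxiom.gci C D q => (q : ℝ) ≤ gsub f e n I C D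

/-- Satisfaction of a set of axioms. -/
def gsatKB (f e : ℝ → ℝ → ℝ) (n : ℝ → ℝ) (I : Interp) (K : Finset KAxiom) : Prop :=
  ∀ ax ∈ K, gsat f e n I ax

/-- Witnessed interpretation: all the relevant infima and suprema are attained. -/
def gWitnessed (f e : ℝ → ℝ → ℝ) (n : ℝ → ℝ) (I : Interp) : Prop :=
  ∀ (C D : GConcept) (j : ℕ) (x : I.Δ),
    (∃ y, gval f e n I (GConcept.ex j C) x = f (I.role j x y) (gval f e n I C y)) ∧
    (∃ y, gval f e n I (GConcept.all j C) x = res f (I.role j x y) (gval f e n I C y)) ∧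
    (∃ y, gsub f e n I C D = res f (gval f e n I C y) (gval f e n I D y))

/-- The atomic concept `A_i` occurs in a concept. -/
def occursC (i : ℕ) : GConcept → Prop
  | GConcept.atom i' => i = i'
  | GConcept.top => False
  | GConcept.bot => False
  | GConcept.conj C D => occursC i C ∨ occursC i D
  | GConcept.disj C D => occursC i C ∨ occursC i D
  | GConcept.neg C => occursC i C
  | GConcept.minc C D => occursC i C ∨ occursC i D
  | GConcept.all _ C => occursC i C
  | GConcept.ex _ C => occursC i C

/-- The atomic concept `A_i` occurs in an axiom. -/
def occursA (i : ℕ) : KAxiom → Prop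
  | KAxiom.assertGE _ C _ => occursC i C
  | KAxiom.assertLE _ C _ => occursC i C
  | KAxiom.roleGE _ _ _ _ => False
  | KAxiom.gci C D _ => occursC i C ∨ occursC i D

open Set

theorem ciInf_mem_Icc {α ι : Type*} [ConditionallyCompleteLattice α] [Nonempty ι] {g : ι → α}
    {a b : α} (hg : ∀ i, g i ∈ Icc a b) : ⨅ i, g i ∈ Icc a b :=
  ⟨le_ciInf fun i => (hg i).1,
    (ciInf_le ⟨a, forall_mem_range.2 fun i => (hg i).1⟩ (Classical.arbitrary ι)).trans (hg _).2⟩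

theorem ciSup_mem_Icc {α ι : Type*} [ConditionallyCompleteLattice α] [Nonempty ι] {g : ι → α}
    {a b : α} (hg : ∀ i, g i ∈ Icc a b) : ⨆ i, g i ∈ Icc a b :=
  ⟨(hg _).1.trans (le_ciSup ⟨b, forall_mem_range.2 fun i => (hg i).2⟩ (Classical.arbitrary ι)),
    ciSup_le fun i => (hg i).2⟩

section Residuum

variable {f : ℝ → ℝ → ℝ} {a b : ℝ}

theorem res_mem_Icc (f : ℝ → ℝ → ℝ) (a b : ℝ) : res f a b ∈ Icc (0:ℝ) 1 :=
  ⟨Real.sSup_nonneg fun _ hz => hz.1.1, Real.sSup_le (fun _ hz => hz.1.2) zero_le_one⟩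

theorem res_mono_right (f : ℝ → ℝ → ℝ) (a : ℝ) {b b' : ℝ} (h : b ≤ b') :
    res f a b ≤ res f a b' := by
  rcases eq_empty_or_nonempty {z ∈ Icc (0:ℝ) 1 | f a z ≤ b} with hS | hS
  · rw [res, hS, Real.sSup_empty]
    exact (res_mem_Icc f a b').1
  · exact csSup_le_csSup ⟨1, fun _ hz => hz.1.2⟩ hS fun z hz => ⟨hz.1, hz.2.trans h⟩

theorem IsContinuousTnorm.continuousOn_right (hf : IsContinuousTnorm f) (ha : a ∈ Icc (0:ℝ) 1) :
    ContinuousOn (f a) (Icc 0 1) :=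
  hf.2.2.2.2.2.comp (continuous_const.prodMk continuous_id).continuousOn fun _ hz => ⟨ha, hz⟩

theorem one_le_res_iff (hf : IsContinuousTnorm f) (ha : a ∈ Icc (0:ℝ) 1) :
    1 ≤ res f a b ↔ a ≤ b := by
  have ha1 : f a 1 = a := hf.2.2.2.2.1 a ha
  constructor
  · intro h
    unfold res at h
    set S := {z ∈ Icc (0:ℝ) 1 | f a z ≤ b}
    have hne : S.Nonempty := by
      by_contra hS
      rw [not_nonempty_iff_eq_empty.mp hS, Real.sSup_empty] at h
      exact absurd h (by norm_num)
    -- continuity makes `S` closed, so its supremum `1` belongs to it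
    have hclosed : IsClosed S :=
      (hf.continuousOn_right ha).preimage_isClosed_of_isClosed isClosed_Icc isClosed_Iic
    have hsup : sSup S = 1 := le_antisymm (res_mem_Icc f a b).2 h
    have hmem : (1:ℝ) ∈ S := hsup ▸ hclosed.csSup_mem hne ⟨1, fun _ hz => hz.1.2⟩
    exact ha1 ▸ hmem.2
  · intro h
    exact le_csSup ⟨1, fun _ hz => hz.1.2⟩ ⟨right_mem_Icc.2 zero_le_one, ha1.trans_le h⟩

end Residuum

def GConcept.substAtom : GConcept → ℕ → GConcept → GConcept
  | atom j, i, C => if j = i then C else atom j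
  | top, _, _ => top
  | bot, _, _ => bot
  | conj E F, i, C => conj (E.substAtom i C) (F.substAtom i C)
  | disj E F, i, C => disj (E.substAtom i C) (F.substAtom i C)
  | neg E, i, C => neg (E.substAtom i C)
  | minc E F, i, C => minc (E.substAtom i C) (F.substAtom i C)
  | all j E, i, C => all j (E.substAtom i C)
  | ex j E, i, C => ex j (E.substAtom i C)

theorem GConcept.substAtom_of_not_occursC {i : ℕ} {C E : GConcept} (h : ¬ occursC i E) :
    E.substAtom i C = E := by
  induction E with
  | atom j => exact if_neg (Ne.symm h)
  | _ => simp_all [substAtom, occursC]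

def Interp.updateAtom (I : Interp) (i : ℕ) (g : I.Δ → ℝ) (hg : ∀ x, g x ∈ Icc (0:ℝ) 1) :
    Interp :=
  { I with
    atom := Function.update I.atom i g
    atom_mem := fun j x => by
      rcases eq_or_ne j i with rfl | hj
      · simpa using hg x
      · simpa [hj] using I.atom_mem j x }

section Semantics

variable {f e : ℝ → ℝ → ℝ} {n : ℝ → ℝ} {I : Interp}

theorem gval_mem_Icc (hf : ∀ x ∈ Icc (0:ℝ) 1, ∀ y ∈ Icc (0:ℝ) 1, f x y ∈ Icc (0:ℝ) 1)
    (he : ∀ x ∈ Icc (0:ℝ) 1, ∀ y ∈ Icc (0:ℝ) 1, e x y ∈ Icc (0:ℝ) 1)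
    (hn : ∀ x ∈ Icc (0:ℝ) 1, n x ∈ Icc (0:ℝ) 1) (I : Interp) (E : GConcept) (x : I.Δ) :
    gval f e n I E x ∈ Icc (0:ℝ) 1 := by
  have := I.nonempty
  induction E generalizing x with
  | atom j => exact I.atom_mem j x
  | top => exact right_mem_Icc.2 zero_le_one
  | bot => exact left_mem_Icc.2 zero_le_one
  | conj E F ihE ihF => exact hf _ (ihE x) _ (ihF x)
  | disj E F ihE ihF => exact he _ (ihE x) _ (ihF x)
  | neg E ih => exact hn _ (ih x)
  | minc E F ihE ihF => exact ⟨le_min (ihE x).1 (ihF x).1, min_le_of_left_le (ihE x).2⟩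
  | all j E _ => exact ciInf_mem_Icc fun y => res_mem_Icc f _ _
  | ex j E ih => exact ciSup_mem_Icc fun y => hf _ (I.role_mem j x y) _ (ih y)

theorem gsub_mono_right {C D D' : GConcept} (h : ∀ x, gval f e n I D x ≤ gval f e n I D' x) :
    gsub f e n I C D ≤ gsub f e n I C D' :=
  ciInf_mono ⟨0, forall_mem_range.2 fun _ => (res_mem_Icc f _ _).1⟩
    fun x => res_mono_right f _ (h x)

theorem one_le_gsub_iff (hf : IsContinuousTnorm f) {C D : GConcept}
    (hC : ∀ x, gval f e n I C x ∈ Icc (0:ℝ) 1) :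
    1 ≤ gsub f e n I C D ↔ ∀ x, gval f e n I C x ≤ gval f e n I D x := by
  have := I.nonempty
  rw [gsub, le_ciInf_iff ⟨0, forall_mem_range.2 fun _ => (res_mem_Icc f _ _).1⟩]
  exact forall_congr' fun x => one_le_res_iff hf (hC x)

theorem gsatKB_insert {ax : KAxiom} {K : Finset KAxiom} :
    gsatKB f e n I (insert ax K) ↔ gsat f e n I ax ∧ gsatKB f e n I K :=
  Finset.forall_mem_insert _ _ _

theorem gsat_gci_one {C D : GConcept} :
    gsat f e n I (KAxiom.gci C D 1) ↔ 1 ≤ gsub f e n I C D := by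
  simp [gsat]

theorem gsatKB_of_gsatKB_minc {K : Finset KAxiom} {C D A : GConcept}
    (h : gsatKB f e n I (insert (KAxiom.gci C (GConcept.minc A D) 1)
      (insert (KAxiom.gci (GConcept.minc A D) C 1) K))) :
    gsatKB f e n I (insert (KAxiom.gci C D 1) K) := by
  obtain ⟨hCM, -, hK⟩ := by simpa only [gsatKB_insert] using h
  refine gsatKB_insert.2 ⟨gsat_gci_one.2 ?_, hK⟩
  exact (gsat_gci_one.1 hCM).trans (gsub_mono_right fun x => min_le_right _ _)

end Semantics

section UpdateAtom

variable {f e : ℝ → ℝ → ℝ} {n : ℝ → ℝ} {I : Interp} {i : ℕ} {C : GConcept}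
  (hC : ∀ x, gval f e n I C x ∈ Icc (0:ℝ) 1)
include hC

theorem gval_updateAtom (E : GConcept) (x : (I.updateAtom i (gval f e n I C) hC).Δ) :
    gval f e n (I.updateAtom i (gval f e n I C) hC) E x = gval f e n I (E.substAtom i C) x := by
  induction E generalizing x with
  | atom j => by_cases hj : j = i <;> simp [gval, GConcept.substAtom, Interp.updateAtom, hj]
  | all j E ih => exact iInf_congr fun y => congrArg _ (ih y)
  | ex j E ih => exact iSup_congr fun y => congrArg _ (ih y)
  | _ => simp_all [gval, GConcept.substAtom]

theorem gsub_updateAtom (E F : GConcept) :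
    gsub f e n (I.updateAtom i (gval f e n I C) hC) E F
      = gsub f e n I (E.substAtom i C) (F.substAtom i C) :=
  iInf_congr fun x => by rw [gval_updateAtom hC E x, gval_updateAtom hC F x]

theorem gsat_updateAtom_iff {ax : KAxiom} (h : ¬ occursA i ax) :
    gsat f e n (I.updateAtom i (gval f e n I C) hC) ax ↔ gsat f e n I ax := by
  cases ax with
  | assertGE a E q | assertLE a E q =>
    rw [gsat, gsat, gval_updateAtom hC E, GConcept.substAtom_of_not_occursC h]
    exact Iff.rfl
  | roleGE => rfl
  | gci E F q =>
    rw [occursA, not_or] at h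
    rw [gsat, gsat, gsub_updateAtom hC, GConcept.substAtom_of_not_occursC h.1,
      GConcept.substAtom_of_not_occursC h.2]

theorem gWitnessed_updateAtom (hw : gWitnessed f e n I) :
    gWitnessed f e n (I.updateAtom i (gval f e n I C) hC) := by
  intro E F j x
  obtain ⟨hex, hall, hsub⟩ := hw (E.substAtom i C) (F.substAtom i C) j x
  simp only [gval_updateAtom hC, gsub_updateAtom hC]
  exact ⟨hex, hall, hsub⟩

end UpdateAtom

theorem gsatKB_updateAtom {f e : ℝ → ℝ → ℝ} {n : ℝ → ℝ} (hf : IsContinuousTnorm f) {I : Interp}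
    {K : Finset KAxiom} {C D : GConcept} {i : ℕ} (hCmem : ∀ x, gval f e n I C x ∈ Icc (0:ℝ) 1)
    (hK : ∀ ax ∈ K, ¬ occursA i ax) (hC : ¬ occursC i C) (hD : ¬ occursC i D)
    (h : gsatKB f e n I (insert (KAxiom.gci C D 1) K)) :
    gsatKB f e n (I.updateAtom i (gval f e n I C) hCmem)
      (insert (KAxiom.gci C (GConcept.minc (GConcept.atom i) D) 1)
        (insert (KAxiom.gci (GConcept.minc (GConcept.atom i) D) C 1) K)) := by
  obtain ⟨hCD, hKsat⟩ := gsatKB_insert.1 h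
  have hle := (one_le_gsub_iff hf hCmem).1 (gsat_gci_one.1 hCD)
  have hvC : ∀ x, gval f e n (I.updateAtom i (gval f e n I C) hCmem) C x = gval f e n I C x :=
    fun x => by rw [gval_updateAtom, GConcept.substAtom_of_not_occursC hC]
  have hvM : ∀ x, gval f e n (I.updateAtom i (gval f e n I C) hCmem)
      (GConcept.minc (GConcept.atom i) D) x = gval f e n I C x := fun x => by
    rw [gval_updateAtom]
    simp only [GConcept.substAtom, if_pos, GConcept.substAtom_of_not_occursC hD, gval]
    exact min_eq_left (hle x)
  simp only [gsatKB_insert, gsat_gci_one]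
  refine ⟨?_, ?_, fun ax hax => (gsat_updateAtom_iff hCmem (hK ax hax)).2 (hKsat ax hax)⟩
  · exact (one_le_gsub_iff hf fun x => hvC x ▸ hCmem x).2 fun x => ((hvC x).trans (hvM x).symm).le
  · exact (one_le_gsub_iff hf fun x => hvM x ▸ hCmem x).2 fun x => ((hvM x).trans (hvC x).symm).le

theorem stmt16_general (f : ℝ → ℝ → ℝ) (hf : IsContinuousTnorm f)
    (e : ℝ → ℝ → ℝ) (n : ℝ → ℝ)
    (he : ∀ x ∈ Set.Icc (0:ℝ) 1, ∀ y ∈ Set.Icc (0:ℝ) 1, e x y ∈ Set.Icc (0:ℝ) 1)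
    (hn : ∀ x ∈ Set.Icc (0:ℝ) 1, n x ∈ Set.Icc (0:ℝ) 1)
    (K : Finset KAxiom)
    (C D : GConcept) (i : ℕ)
    (hK : ∀ ax ∈ K, ¬ occursA i ax) (hC : ¬ occursC i C) (hD : ¬ occursC i D) :
    ((∃ I : Interp, gsatKB f e n I (insert (KAxiom.gci C D 1) K)) ↔
     (∃ I : Interp, gsatKB f e n I
        (insert (KAxiom.gci C (GConcept.minc (GConcept.atom i) D) 1)
          (insert (KAxiom.gci (GConcept.minc (GConcept.atom i) D) C 1) K)))) ∧
    ((∃ I : Interp, Finite I.Δ ∧ gsatKB f e n I (insert (KAxiom.gci C D 1) K)) ↔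
     (∃ I : Interp, Finite I.Δ ∧ gsatKB f e n I
        (insert (KAxiom.gci C (GConcept.minc (GConcept.atom i) D) 1)
          (insert (KAxiom.gci (GConcept.minc (GConcept.atom i) D) C 1) K)))) ∧
    ((∃ I : Interp, gWitnessed f e n I ∧ gsatKB f e n I (insert (KAxiom.gci C D 1) K)) ↔
     (∃ I : Interp, gWitnessed f e n I ∧ gsatKB f e n I
        (insert (KAxiom.gci C (GConcept.minc (GConcept.atom i) D) 1)
          (insert (KAxiom.gci (GConcept.minc (GConcept.atom i) D) C 1) K)))) := by
  have hCmem : ∀ I : Interp, ∀ x, gval f e n I C x ∈ Set.Icc (0:ℝ) 1 :=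
    fun I => gval_mem_Icc hf.1 he hn I C
  have fwd := fun I (hI : gsatKB f e n I _) => gsatKB_updateAtom hf (hCmem I) hK hC hD hI
  refine ⟨⟨?_, ?_⟩, ⟨?_, ?_⟩, ⟨?_, ?_⟩⟩
  · rintro ⟨I, hI⟩
    exact ⟨_, fwd I hI⟩
  · rintro ⟨I, hI⟩
    exact ⟨I, gsatKB_of_gsatKB_minc hI⟩
  · rintro ⟨I, hfin, hI⟩
    exact ⟨I.updateAtom i (gval f e n I C) (hCmem I), hfin, fwd I hI⟩
  · rintro ⟨I, hfin, hI⟩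
    exact ⟨I, hfin, gsatKB_of_gsatKB_minc hI⟩
  · rintro ⟨I, hw, hI⟩
    exact ⟨_, gWitnessed_updateAtom (hCmem I) hw, fwd I hI⟩
  · rintro ⟨I, hw, hI⟩
    exact ⟨I, hw, gsatKB_of_gsatKB_minc hI⟩

theorem stmt16 (f : ℝ → ℝ → ℝ) (hf : IsContinuousTnorm f)
    (e : ℝ → ℝ → ℝ) (n : ℝ → ℝ)
    (he : ∀ x ∈ Set.Icc (0:ℝ) 1, ∀ y ∈ Set.Icc (0:ℝ) 1, e x y ∈ Set.Icc (0:ℝ) 1)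
    (hn : ∀ x ∈ Set.Icc (0:ℝ) 1, n x ∈ Set.Icc (0:ℝ) 1)
    (K : Finset KAxiom) (hKb : ∀ ax ∈ K, axBounded ax)
    (C D : GConcept) (i : ℕ)
    (hK : ∀ ax ∈ K, ¬ occursA i ax) (hC : ¬ occursC i C) (hD : ¬ occursC i D) :
    ((∃ I : Interp, gsatKB f e n I (insert (KAxiom.gci C D 1) K)) ↔
     (∃ I : Interp, gsatKB f e n I
        (insert (KAxiom.gci C (GConcept.minc (GConcept.atom i) D) 1)
          (insert (KAxiom.gci (GConcept.minc (GConcept.atom i) D) C 1) K)))) ∧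
    ((∃ I : Interp, Finite I.Δ ∧ gsatKB f e n I (insert (KAxiom.gci C D 1) K)) ↔
     (∃ I : Interp, Finite I.Δ ∧ gsatKB f e n I
        (insert (KAxiom.gci C (GConcept.minc (GConcept.atom i) D) 1)
          (insert (KAxiom.gci (GConcept.minc (GConcept.atom i) D) C 1) K)))) ∧
    ((∃ I : Interp, gWitnessed f e n I ∧ gsatKB f e n I (insert (KAxiom.gci C D 1) K)) ↔
     (∃ I : Interp, gWitnessed f e n I ∧ gsatKB f e n I
        (insert (KAxiom.gci C (GConcept.minc (GConcept.atom i) D) 1)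
          (insert (KAxiom.gci (GConcept.minc (GConcept.atom i) D) C 1) K)))) :=
  stmt16_general f hf e n he hn K C D i hK hC hD
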